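/- arXiv:2505.11090 — 3 statements merged into one kernel-verified Lean document; each statement's English description precedes it below -/
import Mathlib

section
/- Let G be a graph on n vertices with nondecreasing degree sequence d₁ ≤ ⋯ ≤ d_n and m edges. Suppose there is a positive integer k with k < n/2, d_k ≤ k, and d_{n−k+t} ≤ n−k−1 for a positive integer t ≤ k. Then 2m ≤ k² + (n−2k+t)(n−k−1) + (k−t)(n−1). -/
open SimpleGraph

variable {V : Type*}

theorem stmt3 [Fintype V] [DecidableEq V] (G : SimpleGraph V) [DecidableRel G.Adj]
    (n m k t : ℕ) (hn : n = Fintype.card V) (hm : m = G.edgeFinset.card)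
    (d : Fin n → ℕ) (e : Fin n ≃ V) (hde : ∀ i, d i = G.degree (e i))
    (hmono : Monotone d)
    (hk : 0 < k) (ht : 0 < t) (htk : t ≤ k) (hk2 : 2 * k < n)
    (hdk : d ⟨k - 1, by omega⟩ ≤ k)
    (hdnkt : d ⟨n - k + t - 1, by omega⟩ ≤ n - k - 1) :
    (2 * m : ℤ) ≤ (k : ℤ) ^ 2 + ((n : ℤ) - 2 * k + t) * ((n : ℤ) - k - 1)
      + ((k : ℤ) - t) * ((n : ℤ) - 1) := by
  have hdeg : ∀ i : Fin n, d i ≤ n - 1 := by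
    intro i
    rw [hde]
    have := G.degree_lt_card_verts (e i)
    omega
  set b : ℕ → ℕ := fun i => if i < k then k else if i < n - k + t then n - k - 1 else n - 1
    with hb
  have hdb : ∀ i : Fin n, d i ≤ b i.val := by
    intro i
    simp only [hb]
    split_ifs with h1 h2
    · exact le_trans (hmono (show i ≤ ⟨k - 1, by omega⟩ by simp [Fin.le_def]; omega)) hdk
    · exact le_trans (hmono (show i ≤ ⟨n - k + t - 1, by omega⟩ by
        simp [Fin.le_def]; omega)) hdnkt
    · exact hdeg i
  have hsum : ∑ i : Fin n, d i ≤ ∑ i : Fin n, b i.val :=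
    Finset.sum_le_sum (fun i _ => hdb i)
  have hsum2 : ∑ v, G.degree v = ∑ i : Fin n, d i := by
    rw [← Equiv.sum_comp e (fun v => G.degree v)]
    exact Finset.sum_congr rfl (fun i _ => (hde i).symm)
  have h2m : 2 * m = ∑ i : Fin n, d i := by
    rw [hm, ← hsum2, ← SimpleGraph.sum_degrees_eq_twice_card_edges]
  have hbsum : ∑ i : Fin n, b i.val
      = k * k + (n - 2 * k + t) * (n - k - 1) + (k - t) * (n - 1) := by
    rw [Fin.sum_univ_eq_sum_range]
    rw [Finset.range_eq_Ico,
      ← Finset.sum_Ico_consecutive _ (show 0 ≤ n - k + t by omega) (show n - k + t ≤ n by omega),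
      ← Finset.sum_Ico_consecutive _ (show 0 ≤ k by omega) (show k ≤ n - k + t by omega)]
    have h1 : ∑ i ∈ Finset.Ico 0 k, b i = k * k := by
      rw [Finset.sum_congr rfl (fun i hi => by
        simp only [Finset.mem_Ico] at hi
        simp only [hb]; rw [if_pos hi.2])]
      simp [mul_comm]
    have h2 : ∑ i ∈ Finset.Ico k (n - k + t), b i = (n - 2 * k + t) * (n - k - 1) := by
      rw [Finset.sum_congr rfl (fun i hi => by
        simp only [Finset.mem_Ico] at hi
        simp only [hb]; rw [if_neg (by omega), if_pos hi.2])]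
      rw [Finset.sum_const, Nat.card_Ico]
      congr 1
      omega
    have h3 : ∑ i ∈ Finset.Ico (n - k + t) n, b i = (k - t) * (n - 1) := by
      rw [Finset.sum_congr rfl (fun i hi => by
        simp only [Finset.mem_Ico] at hi
        simp only [hb]; rw [if_neg (by omega), if_neg (by omega)])]
      rw [Finset.sum_const, Nat.card_Ico]
      congr 1
      omega
    rw [h1, h2, h3]
  have hfinal : 2 * m ≤ k * k + (n - 2 * k + t) * (n - k - 1) + (k - t) * (n - 1) := by
    rw [h2m, ← hbsum]; exact hsum
  have h1 : 2 * k ≤ n := by omega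
  have h2 : k + 1 ≤ n := by omega
  have h3 : 1 ≤ n := by omega
  zify [h1, h2, h3, htk, show k ≤ n by omega, show 1 ≤ n - k by omega] at hfinal
  nlinarith [hfinal]
end

section
/- For a connected graph G on n vertices with m edges, the spectral radius satisfies λ₁(G) ≤ √(2m − n + 1), with equality if and only if G is the complete graph K_n or the star K_{1,n−1}. -/
open SimpleGraph

variable {V : Type*}

/-- The spectral radius (largest adjacency eigenvalue) of `G`. -/
noncomputable def adjSpecRad [Fintype V] [DecidableEq V] (G : SimpleGraph V)
    [DecidableRel G.Adj] : ℝ :=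
  sSup (spectrum ℝ (G.adjMatrix ℝ))

/-- `G` is a star `K_{1,n-1}`: there is a center adjacent to exactly the other vertices,
with no other edges. -/
def IsStar (G : SimpleGraph V) : Prop :=
  ∃ c : V, ∀ x y : V, G.Adj x y ↔ x ≠ y ∧ (x = c ∨ y = c)

section Aux

open Finset Matrix

variable [Fintype V] [DecidableEq V]


lemma mem_spectrum_iff_eigen {A : Matrix V V ℝ} {μ : ℝ} :
    μ ∈ spectrum ℝ A ↔ ∃ v, v ≠ 0 ∧ A.mulVec v = μ • v := by
  rw [spectrum.mem_iff, Matrix.isUnit_iff_isUnit_det, isUnit_iff_ne_zero, not_not,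
    ← Matrix.exists_mulVec_eq_zero_iff]
  have hmv : ∀ v : V → ℝ, (algebraMap ℝ (Matrix V V ℝ) μ - A).mulVec v = μ • v - A.mulVec v := by
    intro v
    rw [Matrix.sub_mulVec, Algebra.algebraMap_eq_smul_one, Matrix.smul_mulVec,
      Matrix.one_mulVec]
  constructor
  · rintro ⟨v, hv0, hv⟩
    rw [hmv v, sub_eq_zero] at hv
    exact ⟨v, hv0, hv.symm⟩
  · rintro ⟨v, hv0, hv⟩
    exact ⟨v, hv0, by rw [hmv v, hv, sub_self]⟩

lemma exists_adj_of_ne (G : SimpleGraph V) (hconn : G.Connected) {x y : V} (hxy : x ≠ y) :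
    ∃ z, G.Adj x z := by
  obtain ⟨p⟩ := hconn.preconnected x y
  cases p with
  | nil => exact absurd rfl hxy
  | cons h q => exact ⟨_, h⟩

lemma no_third (G : SimpleGraph V) (hconn : G.Connected) {x y z : V}
    (hx : ∀ a, G.Adj x a → a = y) (hy : ∀ a, G.Adj y a → a = x)
    (hz : z ≠ x) (hz' : z ≠ y) : False := by
  have key : ∀ (a b : V) (_ : G.Walk a b), (a = x ∨ a = y) → (b = x ∨ b = y) := by
    intro a b q
    induction q with
    | nil => exact id
    | cons h q ih =>
      rintro (rfl | rfl)
      · exact ih (Or.inr (hx _ h))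
      · exact ih (Or.inl (hy _ h))
  obtain ⟨p⟩ := hconn.preconnected x z
  rcases key x z p (Or.inl rfl) with rfl | rfl
  · exact hz rfl
  · exact hz' rfl

variable (G : SimpleGraph V) [DecidableRel G.Adj]

lemma degree_split (i : V) :
    G.degree i + (∑ j ∈ G.neighborFinset i, G.degree j)
      + ∑ w ∈ univ \ insert i (G.neighborFinset i), G.degree w
      = 2 * G.edgeFinset.card := by
  rw [← G.sum_degrees_eq_twice_card_edges,
    ← Finset.sum_sdiff (Finset.subset_univ (insert i (G.neighborFinset i))),
    Finset.sum_insert (G.notMem_neighborFinset_self i)]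
  ring

lemma card_split (i : V) :
    (univ \ insert i (G.neighborFinset i)).card + (G.degree i + 1) = Fintype.card V := by
  rw [Finset.card_sdiff_of_subset (Finset.subset_univ _),
    Finset.card_insert_of_notMem (G.notMem_neighborFinset_self i),
    card_neighborFinset_eq_degree, Finset.card_univ]
  have h : (insert i (G.neighborFinset i)).card ≤ Fintype.card V := by
    simpa using Finset.card_le_univ (insert i (G.neighborFinset i))
  rw [Finset.card_insert_of_notMem (G.notMem_neighborFinset_self i),
    card_neighborFinset_eq_degree] at h
  omega

lemma rest_degree_pos (hconn : G.Connected) (i : V) :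
    ∀ w ∈ univ \ insert i (G.neighborFinset i), 1 ≤ G.degree w := by
  intro w hw
  rw [Finset.mem_sdiff, Finset.mem_insert] at hw
  have hwi : w ≠ i := fun h => hw.2 (Or.inl h)
  rw [Nat.succ_le, G.degree_pos_iff_exists_adj]
  exact exists_adj_of_ne G hconn hwi

lemma L1 (hconn : G.Connected) (i : V) :
    (∑ j ∈ G.neighborFinset i, G.degree j) + Fintype.card V
      ≤ 2 * G.edgeFinset.card + 1 := by
  have h1 := degree_split G i
  have h2 := card_split G i
  have h3 : (univ \ insert i (G.neighborFinset i)).card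
      ≤ ∑ w ∈ univ \ insert i (G.neighborFinset i), G.degree w := by
    classical
    calc (univ \ insert i (G.neighborFinset i)).card
        = ∑ _w ∈ univ \ insert i (G.neighborFinset i), 1 := by simp
      _ ≤ _ := Finset.sum_le_sum (rest_degree_pos G hconn i)
  omega

lemma L1eq (hconn : G.Connected) (i : V)
    (heq : (∑ j ∈ G.neighborFinset i, G.degree j) + Fintype.card V
      = 2 * G.edgeFinset.card + 1) :
    ∀ w, w ≠ i → ¬ G.Adj i w → G.degree w = 1 := by
  have h1 := degree_split G i
  have h2 := card_split G i
  have h3 : ∑ w ∈ univ \ insert i (G.neighborFinset i), G.degree w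
      = ∑ _w ∈ univ \ insert i (G.neighborFinset i), 1 := by
    have hle := rest_degree_pos G hconn i
    have hcard : ∑ _w ∈ univ \ insert i (G.neighborFinset i), 1
        = (univ \ insert i (G.neighborFinset i)).card := by simp
    omega
  have h4 := (Finset.sum_eq_sum_iff_of_le (rest_degree_pos G hconn i)).mp h3.symm
  intro w hwi hwadj
  have hw : w ∈ univ \ insert i (G.neighborFinset i) := by
    simp [hwi, hwadj]
  exact (h4 w hw).symm

lemma chain_eq {μ : ℝ} {v : V → ℝ} (hv : (G.adjMatrix ℝ).mulVec v = μ • v) (i : V) :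
    μ ^ 2 * v i = ∑ j ∈ G.neighborFinset i, ∑ k ∈ G.neighborFinset j, v k := by
  have h2 : (G.adjMatrix ℝ).mulVec ((G.adjMatrix ℝ).mulVec v) = (μ ^ 2) • v := by
    rw [hv, Matrix.mulVec_smul, hv, smul_smul, sq]
  have h3 := congrFun h2 i
  rw [G.adjMatrix_mulVec_apply] at h3
  simp only [G.adjMatrix_mulVec_apply] at h3
  rw [h3, Pi.smul_apply, smul_eq_mul]

lemma key_le (hconn : G.Connected) {μ : ℝ} {v : V → ℝ} (hv : (G.adjMatrix ℝ).mulVec v = μ • v)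
    {i : V} (hmax : ∀ k, |v k| ≤ |v i|) :
    μ ^ 2 * |v i| ≤ (2 * (G.edgeFinset.card : ℝ) + 1 - Fintype.card V) * |v i| := by
  have hchain := chain_eq G hv i
  calc μ ^ 2 * |v i| = |μ ^ 2 * v i| := by
        rw [abs_mul, abs_of_nonneg (sq_nonneg μ)]
    _ = |∑ j ∈ G.neighborFinset i, ∑ k ∈ G.neighborFinset j, v k| := by rw [hchain]
    _ ≤ ∑ j ∈ G.neighborFinset i, |∑ k ∈ G.neighborFinset j, v k| := Finset.abs_sum_le_sum_abs _ _
    _ ≤ ∑ j ∈ G.neighborFinset i, ∑ k ∈ G.neighborFinset j, |v k| :=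
        Finset.sum_le_sum fun j _ => Finset.abs_sum_le_sum_abs _ _
    _ ≤ ∑ j ∈ G.neighborFinset i, ∑ _k ∈ G.neighborFinset j, |v i| :=
        Finset.sum_le_sum fun j _ => Finset.sum_le_sum fun k _ => hmax k
    _ = (∑ j ∈ G.neighborFinset i, (G.degree j : ℝ)) * |v i| := by
        simp only [Finset.sum_const, card_neighborFinset_eq_degree, nsmul_eq_mul,
          Finset.sum_mul]
    _ ≤ (2 * (G.edgeFinset.card : ℝ) + 1 - Fintype.card V) * |v i| := by
        apply mul_le_mul_of_nonneg_right _ (abs_nonneg _)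
        have := L1 G hconn i
        have hcast : ((∑ j ∈ G.neighborFinset i, G.degree j : ℕ) : ℝ)
            + (Fintype.card V : ℝ) ≤ 2 * (G.edgeFinset.card : ℝ) + 1 := by
          push_cast
          exact_mod_cast this
        push_cast at hcast ⊢
        linarith

lemma key (hconn : G.Connected) {μ : ℝ} (hμ : μ ∈ spectrum ℝ (G.adjMatrix ℝ)) :
    μ ^ 2 + (Fintype.card V : ℝ) ≤ 2 * (G.edgeFinset.card : ℝ) + 1 := by
  obtain ⟨v, hv0, hv⟩ := mem_spectrum_iff_eigen.mp hμ
  have : Nonempty V := hconn.nonempty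
  obtain ⟨i, -, hmax⟩ := Finset.exists_max_image univ (fun k => |v k|) Finset.univ_nonempty
  have hmax' : ∀ k, |v k| ≤ |v i| := fun k => hmax k (Finset.mem_univ k)
  have hipos : 0 < |v i| := by
    rcases Function.ne_iff.mp hv0 with ⟨k, hk⟩
    exact lt_of_lt_of_le (abs_pos.2 hk) (hmax' k)
  have h := key_le G hconn hv hmax'
  have := le_of_mul_le_mul_right h hipos
  linarith

lemma master (hconn : G.Connected) {v : V → ℝ} {B : ℝ}
    (hv : (G.adjMatrix ℝ).mulVec v = B • v) {i : V}
    (hipos : 0 < v i) (hmax : ∀ k, |v k| ≤ v i)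
    (hB : B ^ 2 = 2 * (G.edgeFinset.card : ℝ) + 1 - Fintype.card V) (k : V) (hk : v k = v i) :
    (∀ j ∈ G.neighborFinset k, ∀ l ∈ G.neighborFinset j, v l = v i) ∧
      (∀ x, x ≠ k → ¬ G.Adj k x → G.degree x = 1) := by
  have hvle : ∀ l, v l ≤ v i := fun l => (le_abs_self _).trans (hmax l)
  have hchain := chain_eq G hv k
  rw [hk, hB] at hchain
  -- hchain : (2m+1-n) * v i = ∑∑ v l
  have hL1 : (∑ j ∈ G.neighborFinset k, (G.degree j : ℝ))
      ≤ 2 * (G.edgeFinset.card : ℝ) + 1 - Fintype.card V := by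
    have := L1 G hconn k
    have h' : ((∑ j ∈ G.neighborFinset k, G.degree j : ℕ) : ℝ)
        + (Fintype.card V : ℝ) ≤ 2 * (G.edgeFinset.card : ℝ) + 1 := by
      exact_mod_cast this
    push_cast at h'
    linarith
  have hconstsum : ∀ j, (∑ _l ∈ G.neighborFinset j, v i) = (G.degree j : ℝ) * v i := by
    intro j
    simp [Finset.sum_const, card_neighborFinset_eq_degree, nsmul_eq_mul]
  have hle1 : (∑ j ∈ G.neighborFinset k, ∑ l ∈ G.neighborFinset j, v l)
      ≤ ∑ j ∈ G.neighborFinset k, ∑ _l ∈ G.neighborFinset j, v i :=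
    Finset.sum_le_sum fun j _ => Finset.sum_le_sum fun l _ => hvle l
  have hconst : (∑ j ∈ G.neighborFinset k, ∑ _l ∈ G.neighborFinset j, v i)
      = (∑ j ∈ G.neighborFinset k, (G.degree j : ℝ)) * v i := by
    rw [Finset.sum_mul]
    exact Finset.sum_congr rfl fun j _ => hconstsum j
  have hle2 : (∑ j ∈ G.neighborFinset k, (G.degree j : ℝ)) * v i
      ≤ (2 * (G.edgeFinset.card : ℝ) + 1 - Fintype.card V) * v i :=
    mul_le_mul_of_nonneg_right hL1 hipos.le
  -- everything is squeezed
  have heq1 : (∑ j ∈ G.neighborFinset k, ∑ l ∈ G.neighborFinset j, v l)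
      = ∑ j ∈ G.neighborFinset k, ∑ _l ∈ G.neighborFinset j, v i := by
    apply le_antisymm hle1
    rw [hconst]
    calc (∑ j ∈ G.neighborFinset k, (G.degree j : ℝ)) * v i
        ≤ (2 * (G.edgeFinset.card : ℝ) + 1 - Fintype.card V) * v i := hle2
      _ = _ := hchain
  have heq2 : (∑ j ∈ G.neighborFinset k, (G.degree j : ℝ))
      = 2 * (G.edgeFinset.card : ℝ) + 1 - Fintype.card V := by
    have h1 : (∑ j ∈ G.neighborFinset k, (G.degree j : ℝ)) * v i
        = (2 * (G.edgeFinset.card : ℝ) + 1 - Fintype.card V) * v i := by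
      rw [← hconst, ← heq1, ← hchain]
    exact mul_right_cancel₀ (ne_of_gt hipos) h1
  constructor
  · -- pointwise equality from heq1
    have houter := (Finset.sum_eq_sum_iff_of_le
      (fun j (_ : j ∈ G.neighborFinset k) => Finset.sum_le_sum
        (fun l (_ : l ∈ G.neighborFinset j) => hvle l))).mp heq1
    intro j hj l hl
    have hinner := (Finset.sum_eq_sum_iff_of_le
      (fun l (_ : l ∈ G.neighborFinset j) => hvle l)).mp (houter j hj)
    exact hinner l hl
  · -- L1 equality
    apply L1eq G hconn k
    have : ((∑ j ∈ G.neighborFinset k, G.degree j : ℕ) + (Fintype.card V : ℕ) : ℝ)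
        = ((2 * G.edgeFinset.card + 1 : ℕ) : ℝ) := by
      push_cast
      linarith [heq2]
    exact_mod_cast this

lemma adjMatrix_isHermitian : (G.adjMatrix ℝ).IsHermitian := by
  unfold Matrix.IsHermitian
  ext a b
  simp [Matrix.conjTranspose_apply, SimpleGraph.adjMatrix_apply, adj_comm]

lemma deg_one_unique {x y : V} (hd : G.degree x = 1) (hy : G.Adj x y) :
    ∀ z, G.Adj x z → z = y := by
  rw [← G.card_neighborFinset_eq_degree] at hd
  obtain ⟨a, ha⟩ := Finset.card_eq_one.mp hd
  intro z hz
  have h1 : y ∈ G.neighborFinset x := (G.mem_neighborFinset x y).mpr hy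
  have h2 : z ∈ G.neighborFinset x := (G.mem_neighborFinset x z).mpr hz
  rw [ha, Finset.mem_singleton] at h1 h2
  rw [h1, h2]


end Aux

section Main

open Finset Matrix

theorem stmt9 [Fintype V] [DecidableEq V] (G : SimpleGraph V) [DecidableRel G.Adj]
    (hconn : G.Connected) :
    adjSpecRad G ≤ Real.sqrt (2 * (G.edgeFinset.card : ℝ) - (Fintype.card V : ℝ) + 1) ∧
      (adjSpecRad G = Real.sqrt (2 * (G.edgeFinset.card : ℝ) - (Fintype.card V : ℝ) + 1) ↔
        G = ⊤ ∨ IsStar G) := by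
  classical
  have hne : Nonempty V := hconn.nonempty
  have h1n : 1 ≤ Fintype.card V := Fintype.card_pos
  set n := Fintype.card V with hn
  set m := G.edgeFinset.card with hm
  set Bv : ℝ := 2 * (m : ℝ) - (n : ℝ) + 1 with hBv
  have hub : ∀ μ ∈ spectrum ℝ (G.adjMatrix ℝ), μ ≤ Real.sqrt Bv := by
    intro μ hμ
    have h := key G hconn hμ
    have hsq : μ ^ 2 ≤ Bv := by rw [hBv]; linarith
    calc μ ≤ |μ| := le_abs_self μ
      _ = Real.sqrt (μ ^ 2) := (Real.sqrt_sq_eq_abs μ).symm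
      _ ≤ Real.sqrt Bv := Real.sqrt_le_sqrt hsq
  have hle : adjSpecRad G ≤ Real.sqrt Bv := Real.sSup_le hub (Real.sqrt_nonneg _)
  have hbdd : BddAbove (spectrum ℝ (G.adjMatrix ℝ)) := (Matrix.finite_spectrum _).bddAbove
  -- nonnegativity of Bv
  have hBnn : 0 ≤ Bv := by
    have := L1 G hconn (Classical.arbitrary V)
    have h' : (n : ℝ) ≤ 2 * (m : ℝ) + 1 := by exact_mod_cast le_trans (Nat.le_add_left _ _) this
    rw [hBv]; linarith
  have hB2 : Real.sqrt Bv ^ 2 = 2 * (m : ℝ) + 1 - n := by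
    rw [Real.sq_sqrt hBnn, hBv]; ring
  refine ⟨hle, ?_, ?_⟩
  · -- forward direction
    intro heq
    by_cases hn1 : n = 1
    · left
      have hsub : Subsingleton V := by
        rw [← Fintype.card_le_one_iff_subsingleton, ← hn, hn1]
      ext x y
      have hxy : x = y := Subsingleton.elim x y
      subst hxy
      simp
    have hn2 : 2 ≤ n := by omega
    have hSne : (spectrum ℝ (G.adjMatrix ℝ)).Nonempty :=
      ⟨_, (adjMatrix_isHermitian G).eigenvalues_mem_spectrum_real (Classical.arbitrary V)⟩
    have hBmem : Real.sqrt Bv ∈ spectrum ℝ (G.adjMatrix ℝ) := by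
      rw [← heq]
      exact hSne.csSup_mem (Matrix.finite_spectrum _)
    obtain ⟨v0, hv00, hv0⟩ := mem_spectrum_iff_eigen.mp hBmem
    obtain ⟨i, -, hmax0⟩ := Finset.exists_max_image Finset.univ (fun k => |v0 k|)
      Finset.univ_nonempty
    set v : V → ℝ := if 0 ≤ v0 i then v0 else -v0 with hvdef
    have hv : (G.adjMatrix ℝ).mulVec v = Real.sqrt Bv • v := by
      rw [hvdef]
      split_ifs
      · exact hv0
      · rw [Matrix.mulVec_neg, hv0, smul_neg]
    have habs : ∀ k, |v k| = |v0 k| := by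
      intro k; rw [hvdef]; split_ifs <;> simp
    have hvi : v i = |v0 i| := by
      rw [hvdef]; split_ifs with h
      · exact (abs_of_nonneg h).symm
      · simp only [Pi.neg_apply]
        exact (abs_of_neg (lt_of_not_ge h)).symm
    have hmax : ∀ k, |v k| ≤ v i := fun k => by
      rw [habs k, hvi]; exact hmax0 k (Finset.mem_univ k)
    have hipos : 0 < v i := by
      rw [hvi]
      rcases Function.ne_iff.mp hv00 with ⟨k, hk⟩
      exact lt_of_lt_of_le (abs_pos.2 hk) (hmax0 k (Finset.mem_univ k))
    have hmast := master G hconn hv hipos hmax hB2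
    by_cases hcomp : ∀ x, x ≠ i → G.Adj i x
    · by_cases hinner : ∃ j j', G.Adj j j' ∧ j ≠ i ∧ j' ≠ i
      · left
        obtain ⟨j, j', hjj, hji, hj'i⟩ := hinner
        have hjS : v j' = v i :=
          (hmast i rfl).1 j ((G.mem_neighborFinset i j).mpr (hcomp j hji)) j'
            ((G.mem_neighborFinset j j').mpr hjj)
        have hall : ∀ l, v l = v i := by
          intro l
          by_cases hl : l = i
          · rw [hl]
          · exact (hmast j' hjS).1 i ((G.mem_neighborFinset j' i).mpr (hcomp j' hj'i).symm) l
              ((G.mem_neighborFinset i l).mpr (hcomp l hl))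
        have hdeg' : ∀ k, (G.degree k : ℝ) = Real.sqrt Bv := by
          intro k
          have h := congrFun hv k
          rw [G.adjMatrix_mulVec_apply] at h
          have hsum : ∑ j ∈ G.neighborFinset k, v j = (G.degree k : ℝ) * v i := by
            rw [Finset.sum_congr rfl fun j _ => hall j]
            simp [Finset.sum_const, card_neighborFinset_eq_degree, nsmul_eq_mul]
          rw [hsum, Pi.smul_apply, smul_eq_mul, hall k] at h
          exact mul_right_cancel₀ (ne_of_gt hipos) h
        have hdk : ∀ k, G.degree k = G.degree i := by
          intro k
          have : (G.degree k : ℝ) = (G.degree i : ℝ) := by rw [hdeg' k, hdeg' i]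
          exact_mod_cast this
        have hNi : G.neighborFinset i = Finset.univ.erase i := by
          ext y
          simp only [SimpleGraph.mem_neighborFinset, Finset.mem_erase, Finset.mem_univ,
            and_true]
          exact ⟨fun h => (G.ne_of_adj h).symm, fun h => hcomp y h⟩
        have hdi : G.degree i = n - 1 := by
          rw [← G.card_neighborFinset_eq_degree, hNi,
            Finset.card_erase_of_mem (Finset.mem_univ i), Finset.card_univ]
        ext x y
        simp only [SimpleGraph.top_adj]
        constructor
        · exact fun h => G.ne_of_adj h
        · intro hxy
          have hNx : G.neighborFinset x = Finset.univ.erase x := by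
            apply Finset.eq_of_subset_of_card_le
            · intro z hz
              rw [SimpleGraph.mem_neighborFinset] at hz
              exact Finset.mem_erase.mpr ⟨(G.ne_of_adj hz).symm, Finset.mem_univ z⟩
            · rw [Finset.card_erase_of_mem (Finset.mem_univ x), Finset.card_univ,
                G.card_neighborFinset_eq_degree, hdk x, hdi]
          rw [← SimpleGraph.mem_neighborFinset, hNx]
          exact Finset.mem_erase.mpr ⟨hxy.symm, Finset.mem_univ y⟩
      · right
        push_neg at hinner
        refine ⟨i, fun x y => ⟨fun h => ⟨G.ne_of_adj h, ?_⟩, ?_⟩⟩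
        · by_contra hcand
          push_neg at hcand
          exact hcand.2 (hinner x y h hcand.1)
        · rintro ⟨hxy, rfl | rfl⟩
          · exact hcomp y (Ne.symm hxy)
          · exact (hcomp x hxy).symm
    · right
      push_neg at hcomp
      obtain ⟨w0, hw0i, hw0adj⟩ := hcomp
      have hd1 : G.degree w0 = 1 := (hmast i rfl).2 w0 hw0i hw0adj
      obtain ⟨z0, hz0⟩ := G.degree_pos_iff_exists_adj w0 |>.mp (by omega)
      have hw0nb : ∀ z, G.Adj w0 z → z = z0 := deg_one_unique G hd1 hz0
      set u := z0 with hu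
      have huadj : G.Adj w0 u := hz0
      have hui : u ≠ i := by
        rintro rfl
        exact hw0adj huadj.symm
      have hAdj_iu : G.Adj i u := by
        by_contra hnot
        have hdu : G.degree u = 1 := (hmast i rfl).2 u hui hnot
        have hunb : ∀ z, G.Adj u z → z = w0 := deg_one_unique G hdu huadj.symm
        exact no_third G hconn hw0nb hunb (Ne.symm hw0i) (Ne.symm hui)
      have hw0S : v w0 = v i :=
        (hmast i rfl).1 u ((G.mem_neighborFinset i u).mpr hAdj_iu) w0
          ((G.mem_neighborFinset u w0).mpr huadj.symm)
      have hmw0 := hmast w0 hw0S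
      have hdall : ∀ x, x ≠ u → x ≠ w0 → G.degree x = 1 := by
        intro x hxu hxw0
        exact hmw0.2 x hxw0 (fun h => hxu (hw0nb x h))
      have hnbr : ∀ x, x ≠ u → ∀ z, G.Adj x z → z = u := by
        intro x hxu z hz
        by_contra hzu
        have hdx : G.degree x = 1 := by
          by_cases hxw : x = w0
          · rw [hxw]; exact hd1
          · exact hdall x hxu hxw
        have hxnb : ∀ a, G.Adj x a → a = z := deg_one_unique G hdx hz
        have hdz : G.degree z = 1 := by
          by_cases hzw : z = w0
          · rw [hzw]; exact hd1
          · exact hdall z hzu hzw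
        have hznb : ∀ a, G.Adj z a → a = x := deg_one_unique G hdz hz.symm
        exact no_third G hconn hxnb hznb (Ne.symm hxu) (Ne.symm hzu)
      refine ⟨u, fun x y => ⟨fun h => ⟨G.ne_of_adj h, ?_⟩, ?_⟩⟩
      · by_contra hcand
        push_neg at hcand
        exact hcand.2 (hnbr x hcand.1 y h)
      · rintro ⟨hxy, rfl | rfl⟩
        · -- x = u, show Adj u y
          obtain ⟨z, hz⟩ := exists_adj_of_ne G hconn (Ne.symm hxy)
          have := hnbr y (Ne.symm hxy) z hz
          subst this
          exact hz.symm
        · obtain ⟨z, hz⟩ := exists_adj_of_ne G hconn hxy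
          have := hnbr x hxy z hz
          subst this
          exact hz
  · -- backward direction
    intro h
    by_cases hn1 : n = 1
    · -- spectral radius is 0 and Bv = 0
      have hsub : Subsingleton V := by
        rw [← Fintype.card_le_one_iff_subsingleton, ← hn, hn1]
      have hdeg0 : ∀ x : V, G.degree x = 0 := by
        intro x
        rw [← G.card_neighborFinset_eq_degree, Finset.card_eq_zero]
        ext y
        simp only [SimpleGraph.mem_neighborFinset, Finset.notMem_empty, iff_false]
        intro hadj
        exact G.ne_of_adj hadj (Subsingleton.elim x y)
      have hm0 : m = 0 := by
        have h2m := G.sum_degrees_eq_twice_card_edges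
        simp only [hdeg0, Finset.sum_const_zero] at h2m
        omega
      have hA0 : G.adjMatrix ℝ = 0 := by
        ext a b
        simp only [SimpleGraph.adjMatrix_apply, Matrix.zero_apply, ite_eq_right_iff]
        intro hadj
        exact absurd (Subsingleton.elim a b) (G.ne_of_adj hadj)
      have : Nontrivial (Matrix V V ℝ) := by
        obtain ⟨x⟩ := hne
        exact ⟨0, Matrix.of fun _ _ => 1, fun hc => by
          simpa using congrFun (congrFun hc x) x⟩
      have hBv0 : Bv = 0 := by rw [hBv, hm0, hn1]; norm_num
      rw [adjSpecRad, hA0, spectrum.zero_eq, csSup_singleton, hBv0, Real.sqrt_zero]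
    have hn2 : 2 ≤ n := by omega
    -- In both cases we produce an eigenvalue equal to √Bv
    suffices hmem : Real.sqrt Bv ∈ spectrum ℝ (G.adjMatrix ℝ) by
      exact le_antisymm hle (le_csSup hbdd hmem)
    rcases h with h1 | hstar
    · -- complete graph
      have hadjall : ∀ x y : V, G.Adj x y ↔ x ≠ y := by
        intro x y; rw [h1]; simp
      have hNx : ∀ x, G.neighborFinset x = Finset.univ.erase x := by
        intro x
        ext y
        simp only [SimpleGraph.mem_neighborFinset, Finset.mem_erase, Finset.mem_univ, and_true,
          hadjall]
        exact ne_comm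
      have hdeg : ∀ x, G.degree x = n - 1 := by
        intro x
        rw [← G.card_neighborFinset_eq_degree, hNx,
          Finset.card_erase_of_mem (Finset.mem_univ x), Finset.card_univ]
      have h2m : 2 * m = n * (n - 1) := by
        have h2m := G.sum_degrees_eq_twice_card_edges
        simp only [hdeg, Finset.sum_const, Finset.card_univ, smul_eq_mul] at h2m
        rw [← h2m, ← hn]
      have hcast : 2 * (m : ℝ) = (n : ℝ) * ((n : ℝ) - 1) := by
        have := congrArg (Nat.cast : ℕ → ℝ) h2m
        push_cast [Nat.cast_sub h1n] at this
        linarith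
      have hBve : Bv = ((n : ℝ) - 1) ^ 2 := by rw [hBv]; nlinarith
      have hsqrt : Real.sqrt Bv = (n : ℝ) - 1 := by
        rw [hBve, Real.sqrt_sq (by
          have : (1 : ℝ) ≤ (n : ℝ) := by exact_mod_cast h1n
          linarith)]
      rw [hsqrt]
      apply mem_spectrum_iff_eigen.mpr
      refine ⟨fun _ => 1, ?_, ?_⟩
      · intro hc
        have := congrFun hc (Classical.arbitrary V)
        norm_num at this
      · funext k
        rw [G.adjMatrix_mulVec_apply]
        simp only [Finset.sum_const, card_neighborFinset_eq_degree, hdeg, nsmul_eq_mul,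
          mul_one, Pi.smul_apply, smul_eq_mul]
        rw [Nat.cast_sub h1n]
        norm_num
    · -- star
      obtain ⟨c, hc⟩ := hstar
      have hNc : G.neighborFinset c = Finset.univ.erase c := by
        ext y
        rw [SimpleGraph.mem_neighborFinset, hc, Finset.mem_erase]
        constructor
        · rintro ⟨h1, -⟩; exact ⟨Ne.symm h1, Finset.mem_univ y⟩
        · rintro ⟨h1, -⟩; exact ⟨Ne.symm h1, Or.inl rfl⟩
      have hdegc : G.degree c = n - 1 := by
        rw [← G.card_neighborFinset_eq_degree, hNc,
          Finset.card_erase_of_mem (Finset.mem_univ c), Finset.card_univ]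
      have hNx : ∀ x, x ≠ c → G.neighborFinset x = {c} := by
        intro x hx
        ext y
        simp only [SimpleGraph.mem_neighborFinset, Finset.mem_singleton, hc]
        constructor
        · rintro ⟨h1, h2 | h2⟩
          · exact absurd h2 hx
          · exact h2
        · rintro rfl
          exact ⟨hx, Or.inr rfl⟩
      have hdegx : ∀ x, x ≠ c → G.degree x = 1 := by
        intro x hx
        rw [← G.card_neighborFinset_eq_degree, hNx x hx, Finset.card_singleton]
      have h2m : 2 * m = 2 * (n - 1) := by
        have h2m := G.sum_degrees_eq_twice_card_edges
        rw [← Finset.add_sum_erase _ _ (Finset.mem_univ c)] at h2m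
        have hsum : ∑ x ∈ Finset.univ.erase c, G.degree x = n - 1 := by
          rw [Finset.sum_congr rfl fun x hx => hdegx x (Finset.mem_erase.mp hx).1]
          simp [Finset.card_erase_of_mem, ← hn]
        rw [hdegc, hsum] at h2m
        omega
      have hcast : 2 * (m : ℝ) = 2 * ((n : ℝ) - 1) := by
        have := congrArg (Nat.cast : ℕ → ℝ) h2m
        push_cast [Nat.cast_sub h1n] at this
        linarith
      have hBve : Bv = (n : ℝ) - 1 := by rw [hBv]; linarith
      have hn1R : (0 : ℝ) ≤ (n : ℝ) - 1 := by
        have : (1 : ℝ) ≤ (n : ℝ) := by exact_mod_cast h1n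
        linarith
      rw [hBve]
      apply mem_spectrum_iff_eigen.mpr
      obtain ⟨y0, hy0⟩ := Fintype.exists_ne_of_one_lt_card (by omega) c
      refine ⟨fun x => if x = c then Real.sqrt ((n : ℝ) - 1) else 1, ?_, ?_⟩
      · intro hcon
        have := congrFun hcon y0
        simp [hy0] at this
      · funext k
        rw [G.adjMatrix_mulVec_apply]
        by_cases hk : k = c
        · subst hk
          rw [hNc]
          have hsum : ∑ y ∈ Finset.univ.erase k,
              (if y = k then Real.sqrt ((n : ℝ) - 1) else 1) = (n : ℝ) - 1 := by
            rw [Finset.sum_congr rfl fun y hy => if_neg (Finset.mem_erase.mp hy).1]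
            simp only [Finset.sum_const, nsmul_eq_mul, mul_one,
              Finset.card_erase_of_mem (Finset.mem_univ k), Finset.card_univ]
            rw [Nat.cast_sub h1n]
            norm_num
          rw [hsum]
          simp only [Pi.smul_apply, smul_eq_mul]
          rw [if_true, Real.mul_self_sqrt hn1R]
        · rw [hNx k hk]
          simp [hk, Pi.smul_apply]

end Main
end

section
/- For any graph G on n ≥ 2 vertices with m edges, the signless Laplacian spectral radius satisfies q(G) ≤ 2m/(n−1) + n − 2. -/
open SimpleGraph

variable {V : Type*}

lemma arith_aux (t d A B s M2 : ℤ) (hd : 1 ≤ d) (hdt : d ≤ t)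
    (hA : A ≤ d*(d-1)) (hB0 : 0 ≤ B) (hB : B ≤ d*(t-d))
    (hs : s ≤ d + A + B) (hm : d + s + B ≤ M2) :
    t*(d^2 + s) ≤ M2*d + d*t*(t-1) := by
  rcases eq_or_lt_of_le hdt with rfl | hlt
  · nlinarith
  · have h1 : d + 1 ≤ t := hlt
    rcases le_or_gt (2*d) t with h | h
    · nlinarith [mul_nonneg (sub_nonneg.2 hdt) (sub_nonneg.2 hA),
        mul_nonneg (sub_nonneg.2 h) (sub_nonneg.2 hB),
        mul_nonneg (mul_nonneg (by linarith : (0:ℤ) ≤ d) (by linarith : (0:ℤ) ≤ t - d)) (by linarith : (0:ℤ) ≤ d - 1)]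
    · nlinarith [mul_nonneg (sub_nonneg.2 hdt) (sub_nonneg.2 hA),
        mul_nonneg (by linarith : (0:ℤ) ≤ 2*d - t) hB0,
        mul_nonneg (mul_nonneg (by linarith : (0:ℤ) ≤ d) (by linarith : (0:ℤ) ≤ t - d)) (by linarith : (0:ℤ) ≤ t - 1 - d)]

lemma count_aux [Fintype V] [DecidableEq V] (G : SimpleGraph V) [DecidableRel G.Adj]
    (v : V) (hd : 1 ≤ G.degree v) :
    ((Fintype.card V : ℤ) - 1) * ((G.degree v : ℤ)^2 + ∑ u ∈ G.neighborFinset v, (G.degree u : ℤ))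
      ≤ 2 * (G.edgeFinset.card : ℤ) * (G.degree v : ℤ)
        + (G.degree v : ℤ) * ((Fintype.card V : ℤ) - 1) * ((Fintype.card V : ℤ) - 2) := by
  classical
  set n := Fintype.card V with hn
  set N := G.neighborFinset v with hN
  set O := (Finset.univ : Finset V) \ insert v N with hO
  have hvN : v ∉ N := by simp [hN]
  have hcardN : N.card = G.degree v := rfl
  have hdn : G.degree v + 1 ≤ n := by
    have : (insert v N).card ≤ n := Finset.card_le_card (Finset.subset_univ _)
    rw [Finset.card_insert_of_notMem hvN, hcardN] at this
    omega
  have hOcard : O.card = n - (G.degree v + 1) := by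
    rw [hO, Finset.card_sdiff_of_subset (Finset.subset_univ _), Finset.card_insert_of_notMem hvN,
      hcardN]
    simp [hn, add_comm]
  -- the three quantities
  set A := ∑ u ∈ N, (G.neighborFinset u ∩ N).card with hA
  set B := ∑ u ∈ N, (G.neighborFinset u ∩ O).card with hB
  -- each neighbor's degree splits
  have f1 : ∑ u ∈ N, G.degree u ≤ N.card + A + B := by
    have : ∀ u ∈ N, G.degree u ≤ 1 + ((G.neighborFinset u ∩ N).card + (G.neighborFinset u ∩ O).card) := by
      intro u hu
      have hsub : G.neighborFinset u ⊆ insert v ((G.neighborFinset u ∩ N) ∪ (G.neighborFinset u ∩ O)) := by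
        intro w hw
        by_cases hwv : w = v
        · simp [hwv]
        · by_cases hwN : w ∈ N
          · exact Finset.mem_insert_of_mem (Finset.mem_union_left _ (Finset.mem_inter.2 ⟨hw, hwN⟩))
          · refine Finset.mem_insert_of_mem (Finset.mem_union_right _ (Finset.mem_inter.2 ⟨hw, ?_⟩))
            simp [hO, hwv, hwN]
      have h5 := Finset.card_insert_le v ((G.neighborFinset u ∩ N) ∪ (G.neighborFinset u ∩ O))
      have h6 := Finset.card_union_le (G.neighborFinset u ∩ N) (G.neighborFinset u ∩ O)
      have h7 := Finset.card_le_card hsub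
      have h8 : G.degree u = (G.neighborFinset u).card := rfl
      omega
    calc ∑ u ∈ N, G.degree u
        ≤ ∑ u ∈ N, (1 + ((G.neighborFinset u ∩ N).card + (G.neighborFinset u ∩ O).card)) :=
          Finset.sum_le_sum this
      _ = N.card + A + B := by
          rw [Finset.sum_add_distrib, Finset.sum_add_distrib, Finset.sum_const, smul_eq_mul,
            mul_one, hA, hB, add_assoc]
  have f2 : A ≤ N.card * (N.card - 1) := by
    have : ∀ u ∈ N, (G.neighborFinset u ∩ N).card ≤ N.card - 1 := by
      intro u hu
      have hsub : G.neighborFinset u ∩ N ⊆ N.erase u := by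
        intro w hw
        rcases Finset.mem_inter.1 hw with ⟨hw1, hw2⟩
        refine Finset.mem_erase.2 ⟨?_, hw2⟩
        intro hwu; subst hwu
        rw [SimpleGraph.mem_neighborFinset] at hw1
        exact G.irrefl hw1
      calc (G.neighborFinset u ∩ N).card ≤ (N.erase u).card := Finset.card_le_card hsub
        _ = N.card - 1 := Finset.card_erase_of_mem hu
    calc A ≤ ∑ _u ∈ N, (N.card - 1) := Finset.sum_le_sum this
      _ = N.card * (N.card - 1) := by rw [Finset.sum_const, smul_eq_mul]
  have f3 : B ≤ N.card * (n - (N.card + 1)) := by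
    have : ∀ u ∈ N, (G.neighborFinset u ∩ O).card ≤ n - (N.card + 1) := by
      intro u hu
      calc (G.neighborFinset u ∩ O).card ≤ O.card :=
          Finset.card_le_card (Finset.inter_subset_right)
        _ = n - (N.card + 1) := by rw [hOcard, hcardN]
    calc B ≤ ∑ _u ∈ N, (n - (N.card + 1)) := Finset.sum_le_sum this
      _ = N.card * (n - (N.card + 1)) := by rw [Finset.sum_const, smul_eq_mul]
  -- double counting for f4
  have hdouble : ∑ w ∈ O, (G.neighborFinset w ∩ N).card = B := by
    have h1 : ∀ w : V, ∀ s : Finset V, (G.neighborFinset w ∩ s).card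
        = ∑ u ∈ s, if G.Adj w u then 1 else 0 := by
      intro w s
      rw [show G.neighborFinset w ∩ s = s.filter (fun u => G.Adj w u) by
        ext u; simp [SimpleGraph.mem_neighborFinset, and_comm], Finset.card_filter]
    simp_rw [hB, h1]
    rw [Finset.sum_comm]
    apply Finset.sum_congr rfl
    intro u _
    apply Finset.sum_congr rfl
    intro w _
    simp [G.adj_comm]
  have f4 : G.degree v + (∑ u ∈ N, G.degree u) + B ≤ 2 * G.edgeFinset.card := by
    have hsum : ∑ w : V, G.degree w = 2 * G.edgeFinset.card :=
      G.sum_degrees_eq_twice_card_edges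
    have hsplit : ∑ w : V, G.degree w
        = (∑ w ∈ O, G.degree w) + (G.degree v + ∑ u ∈ N, G.degree u) := by
      rw [← Finset.sum_sdiff (Finset.subset_univ (insert v N)), ← hO,
        Finset.sum_insert hvN]
    have hBO : B ≤ ∑ w ∈ O, G.degree w := by
      rw [← hdouble]
      apply Finset.sum_le_sum
      intro w _
      exact Finset.card_le_card (Finset.inter_subset_left)
    omega
  -- now cast everything to ℤ and apply arith_aux
  rw [hcardN] at f2 f3
  have hd' : (1:ℤ) ≤ (G.degree v : ℤ) := by exact_mod_cast hd
  have hdt : (G.degree v : ℤ) ≤ (n:ℤ) - 1 := by omega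
  have hA' : (A:ℤ) ≤ (G.degree v : ℤ) * ((G.degree v : ℤ) - 1) := by
    have h2 : ((A:ℕ):ℤ) ≤ ((G.degree v * (G.degree v - 1) : ℕ):ℤ) := Int.ofNat_le.2 f2
    push_cast [Nat.cast_sub hd] at h2
    linarith
  have hB' : (B:ℤ) ≤ (G.degree v : ℤ) * (((n:ℤ) - 1) - (G.degree v : ℤ)) := by
    have h2 : ((B:ℕ):ℤ) ≤ ((G.degree v * (n - (G.degree v + 1)) : ℕ):ℤ) := Int.ofNat_le.2 f3
    push_cast [Nat.cast_sub hdn] at h2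
    calc (B:ℤ) ≤ (G.degree v : ℤ) * ((n:ℤ) - ((G.degree v : ℤ) + 1)) := h2
      _ = (G.degree v : ℤ) * (((n:ℤ) - 1) - (G.degree v : ℤ)) := by ring
  have hs' : (∑ u ∈ N, (G.degree u : ℤ)) ≤ (G.degree v : ℤ) + (A:ℤ) + (B:ℤ) := by
    rw [hcardN] at f1
    exact_mod_cast f1
  have hm' : (G.degree v : ℤ) + (∑ u ∈ N, (G.degree u : ℤ)) + (B:ℤ)
      ≤ 2 * (G.edgeFinset.card : ℤ) := by exact_mod_cast f4
  have hmain := arith_aux ((n:ℤ)-1) (G.degree v) A B (∑ u ∈ N, (G.degree u : ℤ))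
    (2 * (G.edgeFinset.card : ℤ)) hd' hdt hA' (Int.natCast_nonneg B) hB' hs' hm'
  calc ((n:ℤ) - 1) * ((G.degree v : ℤ)^2 + ∑ u ∈ N, (G.degree u : ℤ))
      ≤ 2 * (G.edgeFinset.card : ℤ) * (G.degree v : ℤ)
        + (G.degree v : ℤ) * ((n:ℤ)-1) * (((n:ℤ)-1)-1) := hmain
    _ = 2 * (G.edgeFinset.card : ℤ) * (G.degree v : ℤ)
        + (G.degree v : ℤ) * ((n:ℤ)-1) * ((n:ℤ)-2) := by ring


/-- The signless Laplacian spectral radius of `G`: the largest eigenvalue of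
`Q(G) = D'(G) + A(G)`. -/
noncomputable def qSpecRad [Fintype V] [DecidableEq V] (G : SimpleGraph V)
    [DecidableRel G.Adj] : ℝ :=
  sSup (spectrum ℝ (Matrix.diagonal (fun v => (G.degree v : ℝ)) + G.adjMatrix ℝ))

theorem stmt10 [Fintype V] [DecidableEq V] (G : SimpleGraph V) [DecidableRel G.Adj]
    (hn : 2 ≤ Fintype.card V) :
    qSpecRad G ≤ 2 * (G.edgeFinset.card : ℝ) / ((Fintype.card V : ℝ) - 1)
      + (Fintype.card V : ℝ) - 2 := by
  classical
  have hn1 : (1:ℝ) ≤ (Fintype.card V : ℝ) - 1 := by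
    have : (2:ℝ) ≤ (Fintype.card V : ℝ) := by exact_mod_cast hn
    linarith
  have hm0 : (0:ℝ) ≤ 2 * (G.edgeFinset.card : ℝ) / ((Fintype.card V : ℝ) - 1) := by
    apply div_nonneg
    · positivity
    · linarith
  have hRHS0 : 0 ≤ 2 * (G.edgeFinset.card : ℝ) / ((Fintype.card V : ℝ) - 1)
      + (Fintype.card V : ℝ) - 2 := by linarith
  apply Real.sSup_le _ hRHS0
  intro lam hlam
  rcases le_or_gt lam 0 with h0 | hpos
  · linarith
  -- extract an eigenvector
  rw [← AlgEquiv.spectrum_eq (Matrix.toLinAlgEquiv' :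
      Matrix V V ℝ ≃ₐ[ℝ] _), ← Module.End.hasEigenvalue_iff_mem_spectrum] at hlam
  obtain ⟨x, hx⟩ := hlam.exists_hasEigenvector
  have hmv : ∀ w : V, (G.degree w : ℝ) * x w + ∑ u ∈ G.neighborFinset w, x u = lam * x w := by
    intro w
    have h1 := congrFun (hx.apply_eq_smul) w
    have h2 : (Matrix.toLinAlgEquiv' ((Matrix.diagonal fun v => ((G.degree v : ℝ))) + G.adjMatrix ℝ)) x
        = Matrix.mulVec ((Matrix.diagonal fun v => ((G.degree v : ℝ))) + G.adjMatrix ℝ) x := rfl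
    rw [h2] at h1
    simpa [Matrix.add_mulVec, Matrix.mulVec_diagonal,
      SimpleGraph.adjMatrix_mulVec_apply] using h1
  by_cases hiso : ∀ w, x w ≠ 0 → 1 ≤ G.degree w
  · -- all support vertices have positive degree
    obtain ⟨w0, hw0⟩ := Function.ne_iff.mp hx.2
    have hSne : (Finset.univ.filter (fun u => 1 ≤ G.degree u)).Nonempty :=
      ⟨w0, by simp [hiso w0 hw0]⟩
    obtain ⟨v, hvS, hvmax⟩ := Finset.exists_max_image
      (Finset.univ.filter (fun u => 1 ≤ G.degree u)) (fun u => |x u| / (G.degree u : ℝ)) hSne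
    have hdv : 1 ≤ G.degree v := (Finset.mem_filter.mp hvS).2
    have hd1 : (1:ℝ) ≤ (G.degree v : ℝ) := by exact_mod_cast hdv
    have hd0 : (0:ℝ) < (G.degree v : ℝ) := by linarith
    set z : ℝ := |x v| / (G.degree v : ℝ) with hz
    have hz0 : 0 < z := by
      have hw0deg : 1 ≤ G.degree w0 := hiso w0 hw0
      have h1 : (0:ℝ) < |x w0| / (G.degree w0 : ℝ) := by
        apply div_pos (abs_pos.2 hw0)
        exact_mod_cast Nat.lt_of_lt_of_le Nat.zero_lt_one hw0deg
      have h2 := hvmax w0 (by simp [hw0deg])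
      exact lt_of_lt_of_le h1 h2
    have hxv : |x v| = (G.degree v : ℝ) * z := by
      rw [hz]; field_simp
    -- bound each neighbor
    have hnb : ∀ u ∈ G.neighborFinset v, |x u| ≤ (G.degree u : ℝ) * z := by
      intro u hu
      have hadj : G.Adj v u := (SimpleGraph.mem_neighborFinset _ _ _).1 hu
      have hdu : 1 ≤ G.degree u := by
        rw [← SimpleGraph.card_neighborFinset_eq_degree]
        exact Finset.card_pos.2 ⟨v, (SimpleGraph.mem_neighborFinset _ _ _).2 hadj.symm⟩
      have hdu' : (0:ℝ) < (G.degree u : ℝ) := by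
        exact_mod_cast Nat.lt_of_lt_of_le Nat.zero_lt_one hdu
      have h2 := hvmax u (by simp [hdu])
      calc |x u| = (G.degree u : ℝ) * (|x u| / (G.degree u : ℝ)) := by field_simp
        _ ≤ (G.degree u : ℝ) * z := by
            exact mul_le_mul_of_nonneg_left h2 (le_of_lt hdu')
    -- key eigenvalue inequality
    set s : ℝ := ∑ u ∈ G.neighborFinset v, (G.degree u : ℝ) with hs
    have hkey : lam * (G.degree v : ℝ) ≤ (G.degree v : ℝ)^2 + s := by
      have h1 := hmv v
      have h2 : lam * |x v| ≤ (G.degree v : ℝ) * |x v| + ∑ u ∈ G.neighborFinset v, |x u| := by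
        calc lam * |x v| = |lam * x v| := by
              rw [abs_mul, abs_of_pos hpos]
          _ = |(G.degree v : ℝ) * x v + ∑ u ∈ G.neighborFinset v, x u| := by rw [h1]
          _ ≤ |(G.degree v : ℝ) * x v| + |∑ u ∈ G.neighborFinset v, x u| := abs_add_le _ _
          _ ≤ (G.degree v : ℝ) * |x v| + ∑ u ∈ G.neighborFinset v, |x u| := by
              gcongr
              · rw [abs_mul, abs_of_pos hd0]
              · exact Finset.abs_sum_le_sum_abs _ _
      have h3 : ∑ u ∈ G.neighborFinset v, |x u| ≤ s * z := by
        rw [hs, Finset.sum_mul]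
        exact Finset.sum_le_sum hnb
      have h4 : lam * ((G.degree v : ℝ) * z) ≤ ((G.degree v : ℝ)^2 + s) * z := by
        rw [← hxv]
        calc lam * |x v| ≤ (G.degree v : ℝ) * |x v| + ∑ u ∈ G.neighborFinset v, |x u| := h2
          _ ≤ (G.degree v : ℝ) * ((G.degree v : ℝ) * z) + s * z := by rw [hxv] at *; linarith
          _ = ((G.degree v : ℝ)^2 + s) * z := by ring
      have h5 : (lam * (G.degree v : ℝ)) * z ≤ ((G.degree v : ℝ)^2 + s) * z := by
        calc (lam * (G.degree v : ℝ)) * z = lam * ((G.degree v : ℝ) * z) := by ring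
          _ ≤ ((G.degree v : ℝ)^2 + s) * z := h4
      exact le_of_mul_le_mul_right h5 hz0
    -- counting bound, cast to ℝ
    have hcnt := count_aux G v hdv
    have hcntR : ((Fintype.card V : ℝ) - 1) * ((G.degree v : ℝ)^2 + s)
        ≤ 2 * (G.edgeFinset.card : ℝ) * (G.degree v : ℝ)
          + (G.degree v : ℝ) * ((Fintype.card V : ℝ) - 1) * ((Fintype.card V : ℝ) - 2) := by
      rw [hs]
      exact_mod_cast hcnt
    -- conclude
    have hne : ((Fintype.card V : ℝ) - 1) ≠ 0 := by linarith
    have hrw : (2 * (G.edgeFinset.card : ℝ) / ((Fintype.card V : ℝ) - 1)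
          + (Fintype.card V : ℝ) - 2) * ((G.degree v : ℝ) * ((Fintype.card V : ℝ) - 1))
        = 2 * (G.edgeFinset.card : ℝ) * (G.degree v : ℝ)
          + (G.degree v : ℝ) * ((Fintype.card V : ℝ) - 1) * ((Fintype.card V : ℝ) - 2) := by
      field_simp
      ring
    have hfin : lam * ((G.degree v : ℝ) * ((Fintype.card V : ℝ) - 1))
        ≤ (2 * (G.edgeFinset.card : ℝ) / ((Fintype.card V : ℝ) - 1)
          + (Fintype.card V : ℝ) - 2) * ((G.degree v : ℝ) * ((Fintype.card V : ℝ) - 1)) := by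
      rw [hrw]
      have h6 : (lam * (G.degree v : ℝ)) * ((Fintype.card V : ℝ) - 1)
          ≤ (((G.degree v : ℝ))^2 + s) * ((Fintype.card V : ℝ) - 1) :=
        mul_le_mul_of_nonneg_right hkey (by linarith)
      nlinarith [hcntR]
    have hpos2 : (0:ℝ) < (G.degree v : ℝ) * ((Fintype.card V : ℝ) - 1) := by nlinarith
    exact le_of_mul_le_mul_right hfin hpos2
  · -- some support vertex is isolated: lam = 0, contradiction
    push_neg at hiso
    obtain ⟨w, hxw, hdw⟩ := hiso
    have hdw0 : G.degree w = 0 := by omega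
    have hnf : G.neighborFinset w = ∅ := by
      rw [← Finset.card_eq_zero, SimpleGraph.card_neighborFinset_eq_degree]
      exact hdw0
    have h1 := hmv w
    rw [hnf, hdw0] at h1
    simp at h1
    rcases h1 with h1 | h1
    · linarith
    · exact absurd h1 hxw
end
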